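/- Let g be an isometry of a CAT(0) space acting by translation of length L > 0 along an axis A (a geodesic line), and let h be another such isometry with axis B and translation length L, with A ≠ B and A ∩ B a geodesic segment. Then the length of A ∩ B is strictly less than L, provided the group generated by g and h acts freely. -/

import Mathlib

/-!
Two isometric lines that share a segment are reparametrisations of each other on it, by
`t ↦ t + c` or `t ↦ c - t`; replacing `h` by `h⁻¹` in the second case, `g` and `h` both move the
left endpoint `v` of the overlap to the point at distance `L` further along it, as long as the
overlap has length at least `L`. Then `h⁻¹ g` fixes `v`, so by freeness `g = h`; but a line
translated by `g` is determined by a segment of length `L`, so the two axes would coincide.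
-/

open Set Function

lemma eqOn_add_of_abs_sub_eq_of_le {f : ℝ → ℝ} {a b : ℝ}
    (hf : ∀ s ∈ Icc a b, ∀ t ∈ Icc a b, |f s - f t| = |s - t|) (hab : f a ≤ f b) :
    EqOn f (· + (f a - a)) (Icc a b) := by
  intro s hs
  have ha : a ∈ Icc a b := ⟨le_rfl, hs.1.trans hs.2⟩
  have hb : b ∈ Icc a b := ⟨hs.1.trans hs.2, le_rfl⟩
  have hab' := hf b hb a ha
  have hsa := hf s hs a ha
  have hbs := hf b hb s hs
  rw [abs_of_nonneg (sub_nonneg.2 hab), abs_of_nonneg (by linarith [hs.1, hs.2])] at hab'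
  rw [abs_of_nonneg (sub_nonneg.2 hs.1)] at hsa
  rw [abs_of_nonneg (sub_nonneg.2 hs.2)] at hbs
  -- equality in the triangle inequality `f b - f a ≤ |f b - f s| + |f s - f a|`
  linarith [le_abs_self (f s - f a), le_abs_self (f b - f s)]

lemma exists_eqOn_add_or_eqOn_sub_of_abs_sub_eq {f : ℝ → ℝ} {a b : ℝ}
    (hf : ∀ s ∈ Icc a b, ∀ t ∈ Icc a b, |f s - f t| = |s - t|) :
    ∃ c, EqOn f (· + c) (Icc a b) ∨ EqOn f (c - ·) (Icc a b) := by
  rcases le_total (f a) (f b) with hab | hba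
  · exact ⟨_, .inl (eqOn_add_of_abs_sub_eq_of_le hf hab)⟩
  · have hf' : ∀ s ∈ Icc a b, ∀ t ∈ Icc a b, |-f s - -f t| = |s - t| := by
      intro s hs t ht
      rw [← hf s hs t ht, ← abs_neg]
      ring_nf
    refine ⟨f a + a, .inr fun s hs => ?_⟩
    have := eqOn_add_of_abs_sub_eq_of_le (f := fun s => -f s) hf' (neg_le_neg hba) hs
    simp only at this
    linarith

lemma Isometry.exists_eqOn_add_or_eqOn_sub {X : Type*} [MetricSpace X] {γ δ : ℝ → X}
    (hγ : Isometry γ) (hδ : Isometry δ) {a b : ℝ} (hsub : γ '' Icc a b ⊆ range δ) :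
    ∃ c, EqOn γ (fun t => δ (t + c)) (Icc a b) ∨ EqOn γ (fun t => δ (c - t)) (Icc a b) := by
  have hψ : ∀ s ∈ Icc a b, ∃ u, δ u = γ s := fun s hs => hsub (mem_image_of_mem γ hs)
  choose! ψ hψ using hψ
  have hdist : ∀ s ∈ Icc a b, ∀ t ∈ Icc a b, |ψ s - ψ t| = |s - t| := by
    intro s hs t ht
    rw [← Real.dist_eq, ← Real.dist_eq, ← hδ.dist_eq, hψ s hs, hψ t ht, hγ.dist_eq]
  obtain ⟨c, hc | hc⟩ := exists_eqOn_add_or_eqOn_sub_of_abs_sub_eq hdist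
  · exact ⟨c, .inl fun s hs => by simp only [← hc hs, hψ s hs]⟩
  · exact ⟨c, .inr fun s hs => by simp only [← hc hs, hψ s hs]⟩

section Translation

variable {X : Type*} [MetricSpace X] {g : X ≃ᵢ X} {γ δ : ℝ → X} {L : ℝ}

lemma IsometryEquiv.inv_apply_of_translate (hg : ∀ t, g (γ t) = γ (t + L)) (t : ℝ) :
    g⁻¹ (γ t) = γ (t - L) := by
  apply g.injective
  rw [apply_inv_self, hg, sub_add_cancel]

lemma IsometryEquiv.zpow_apply_of_translate (hg : ∀ t, g (γ t) = γ (t + L)) (n : ℤ) (t : ℝ) :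
    (g ^ n) (γ t) = γ (t + n * L) := by
  induction n using Int.induction_on generalizing t with
  | zero => simp
  | succ n ih =>
    rw [zpow_add_one, mul_apply, hg, ih]
    push_cast; ring_nf
  | pred n ih =>
    rw [zpow_sub_one, mul_apply, inv_apply_of_translate hg, ih]
    push_cast; ring_nf

lemma eq_of_eqOn_Icc_of_translate (hL : 0 < L) {a b : ℝ} (hab : a + L ≤ b)
    (hγ : ∀ t, g (γ t) = γ (t + L)) (hδ : ∀ t, g (δ t) = δ (t + L))
    (h : EqOn γ δ (Icc a b)) : γ = δ := by
  funext s
  obtain ⟨n, hn, -⟩ := existsUnique_add_zsmul_mem_Ico hL s a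
  rw [zsmul_eq_mul] at hn
  apply (g ^ n).injective
  rw [IsometryEquiv.zpow_apply_of_translate hγ, IsometryEquiv.zpow_apply_of_translate hδ]
  exact h ⟨hn.1, by linarith [hn.2]⟩

end Translation

lemma Isometry.exists_translate_eqOn_of_image_Icc_subset_range {X : Type*} [MetricSpace X]
    {γ δ : ℝ → X} (hγ : Isometry γ) (hδ : Isometry δ) {h : X ≃ᵢ X} {L : ℝ}
    (hh : ∀ t, h (δ t) = δ (t + L)) {a b : ℝ} (hsub : γ '' Icc a b ⊆ range δ) :
    ∃ δ' : ℝ → X, ∃ k ∈ ({h, h⁻¹} : Set (X ≃ᵢ X)),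
      range δ' = range δ ∧ (∀ t, k (δ' t) = δ' (t + L)) ∧ EqOn γ δ' (Icc a b) := by
  obtain ⟨c, hc | hc⟩ := hγ.exists_eqOn_add_or_eqOn_sub hδ hsub
  · refine ⟨δ ∘ Equiv.addRight c, h, .inl rfl, (Equiv.surjective _).range_comp δ,
      fun t => ?_, hc⟩
    simp only [comp_apply, Equiv.coe_addRight, hh, add_right_comm]
  · refine ⟨δ ∘ Equiv.subLeft c, h⁻¹, .inr rfl, (Equiv.surjective _).range_comp δ,
      fun t => ?_, hc⟩
    simp only [comp_apply, Equiv.subLeft_apply, IsometryEquiv.inv_apply_of_translate hh, sub_sub]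

theorem axis_overlap_lt_translation_length_general (X : Type*) [MetricSpace X]
    (g h : X ≃ᵢ X) (L : ℝ) (hL : 0 < L)
    (γA γB : ℝ → X) (hγA : Isometry γA) (hγB : Isometry γB)
    (hgA : ∀ t, g (γA t) = γA (t + L)) (hhB : ∀ t, h (γB t) = γB (t + L))
    (hAB : Set.range γA ≠ Set.range γB)
    (s₀ s₁ : ℝ)
    (hover : Set.range γA ∩ Set.range γB = γA '' Set.Icc s₀ s₁)
    (hfree : ∀ w ∈ Subgroup.closure ({g, h} : Set (X ≃ᵢ X)), w ≠ 1 → ∀ x : X, w x ≠ x) :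
    s₁ - s₀ < L := by
  by_contra! hlt
  obtain ⟨δ, k, hk, hδB, hkδ, hAδ⟩ :=
    hγA.exists_translate_eqOn_of_image_Icc_subset_range hγB hhB (hover ▸ inter_subset_right)
  have hg_mem : g ∈ Subgroup.closure ({g, h} : Set (X ≃ᵢ X)) := Subgroup.subset_closure (by simp)
  have hk_mem : k ∈ Subgroup.closure ({g, h} : Set (X ≃ᵢ X)) := by
    rcases hk with rfl | rfl
    · exact Subgroup.subset_closure (by simp)
    · exact inv_mem (Subgroup.subset_closure (by simp))
  by_cases hkg : k = g
  · subst hkg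
    exact hAB (hδB ▸ congrArg range (eq_of_eqOn_Icc_of_translate hL (by linarith) hgA hkδ hAδ))
  · have hfix : (k⁻¹ * g) (γA s₀) = γA s₀ := by
      rw [IsometryEquiv.mul_apply, hgA, hAδ ⟨by linarith, by linarith⟩, ← hkδ,
        IsometryEquiv.inv_apply_self, hAδ ⟨le_rfl, by linarith⟩]
    exact hfree _ (mul_mem (inv_mem hk_mem) hg_mem) (mt inv_mul_eq_one.1 hkg) _ hfix

/-- Overlap of distinct axes is shorter than the translation length.  `g` and `h` are
isometries of a (CAT(0)) metric space `X`, translating by length `L > 0` along their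
respective axes `A = range γA` and `B = range γB` (geodesic lines, i.e. isometrically
embedded copies of ℝ).  If `A ≠ B`, the overlap `A ∩ B` is the geodesic segment
`γA '' [s₀, s₁]`, and the group generated by `g` and `h` acts freely on `X`, then the
length `s₁ − s₀` of the overlap is strictly less than `L`. -/
theorem axis_overlap_lt_translation_length (X : Type*) [MetricSpace X]
    (g h : X ≃ᵢ X) (L : ℝ) (hL : 0 < L)
    (γA γB : ℝ → X) (hγA : Isometry γA) (hγB : Isometry γB)
    (hgA : ∀ t, g (γA t) = γA (t + L)) (hhB : ∀ t, h (γB t) = γB (t + L))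
    (hAB : Set.range γA ≠ Set.range γB)
    (s₀ s₁ : ℝ) (hs : s₀ ≤ s₁)
    (hover : Set.range γA ∩ Set.range γB = γA '' Set.Icc s₀ s₁)
    (hfree : ∀ w ∈ Subgroup.closure ({g, h} : Set (X ≃ᵢ X)), w ≠ 1 → ∀ x : X, w x ≠ x) :
    s₁ - s₀ < L :=
  axis_overlap_lt_translation_length_general X g h L hL γA γB hγA hγB hgA hhB hAB s₀ s₁ hover hfree
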